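/- Let A be a measurement with n outcomes on ℂ^d such that every effect A x is a nonzero orthogonal projection (A x is Hermitian and A x * A x = A x). Then F(A) is an orthogonal projection of rank n: F(A) is Hermitian, F(A) * F(A) = F(A), and Matrix.rank (F(A)) = n. -/

import Mathlib

/-!
The effects of a sharp measurement are mutually orthogonal: for `x ≠ y` the nonnegative numbers
`tr ((A y A x)ᴴ (A y A x)) = tr (A y A x)` sum over `y ≠ x` to `tr (A x (1 - A x)) = 0`.
Hence the vectorizations `|A x⟩` are pairwise orthogonal with `⟨A x|A x⟩ = tr (A x)`, so `F(A)` is a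
sum of `n` mutually orthogonal rank-one projections `|A x⟩⟨A x| / ⟨A x|A x⟩`, and the rank of this
projection is its trace `n`.
-/

open Matrix
open scoped Kronecker ComplexOrder

noncomputable section

/-- A measurement (POVM): a finite family of positive semidefinite matrices summing to `1`. -/
def IsMeasurement {ι κ : Type*} [Fintype ι] [DecidableEq ι] [Fintype κ]
    (A : κ → Matrix ι ι ℂ) : Prop :=
  (∀ x, (A x).PosSemidef) ∧ ∑ x, A x = 1

/-- `A` is a post-processing of `B`: `A ⪯ B`. -/
def PostProc {ι : Type*} {n m : ℕ}
    (A : Fin n → Matrix ι ι ℂ) (B : Fin m → Matrix ι ι ℂ) : Prop :=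
  ∃ μ : Fin n → Fin m → ℝ,
    (∀ x y, 0 ≤ μ x y) ∧ (∀ y, ∑ x, μ x y = 1) ∧
    (∀ x, A x = ∑ y, (μ x y : ℂ) • B y)

/-- The outer product `|E⟩⟨F|` of the vectorizations of two matrices. -/
def outerProd {ι : Type*} (E F : Matrix ι ι ℂ) : Matrix (ι × ι) (ι × ι) ℂ :=
  Matrix.of fun p q => E p.1 p.2 * star (F q.1 q.2)

/-- The (un-normalized) Fisher information map of a measurement. -/
noncomputable def Fisher {ι κ : Type*} [Fintype ι] [Fintype κ]
    (A : κ → Matrix ι ι ℂ) : Matrix (ι × ι) (ι × ι) ℂ :=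
  ∑ x, (Matrix.trace (A x))⁻¹ • outerProd (A x) (A x)

/-- The generalized Fisher information map of a measurement, relative to a
positive definite state `ρ` (with positive semidefinite square root `ρ^{1/2}`). -/
noncomputable def FisherRho {ι κ : Type*} [Fintype ι] [DecidableEq ι] [Fintype κ]
    {ρ : Matrix ι ι ℂ} (hρ : ρ.PosDef) (A : κ → Matrix ι ι ℂ) :
    Matrix (ι × ι) (ι × ι) ℂ :=
  ∑ x, (Matrix.trace (ρ * A x))⁻¹ •
    outerProd ((hρ.posSemidef.1.eigenvectorUnitary.1 *
        diagonal ((↑) ∘ (Real.sqrt ∘ hρ.posSemidef.1.eigenvalues)) *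
        (star hρ.posSemidef.1.eigenvectorUnitary : Matrix ι ι ℂ)) * A x)
      ((hρ.posSemidef.1.eigenvectorUnitary.1 *
        diagonal ((↑) ∘ (Real.sqrt ∘ hρ.posSemidef.1.eigenvalues)) *
        (star hρ.posSemidef.1.eigenvectorUnitary : Matrix ι ι ℂ)) * A x)

/-- The height of a finite family of self-adjoint matrices: the infimum of the traces of
Hermitian matrices dominating every member in the Loewner order. -/
noncomputable def height {ι κ : Type*} [Fintype ι] [Fintype κ]
    (X : κ → Matrix ι ι ℂ) : ℝ :=
  sInf { t : ℝ | ∃ H : Matrix ι ι ℂ, H.IsHermitian ∧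
    (∀ i, (H - X i).PosSemidef) ∧ t = (Matrix.trace H).re }

namespace Matrix

variable {ι : Type*} [Fintype ι] [DecidableEq ι]

theorem rank_eq_trace_of_isIdempotentElem {K : Type*} [Field K] [CharZero K]
    {P : Matrix ι ι K} (hP : IsIdempotentElem P) : (P.rank : K) = P.trace := by
  have h : IsIdempotentElem (toLin' P) := hP.map (toLinAlgEquiv' (R := K) (n := ι))
  rw [← trace_toLin'_eq, ((LinearMap.isProj_range_iff_isIdempotentElem _).mpr h).trace, rank]
  rfl

theorem mul_eq_zero_of_sum_eq_one {𝕜 κ : Type*} [RCLike 𝕜] [Fintype κ] {P : κ → Matrix ι ι 𝕜}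
    (hherm : ∀ x, (P x).IsHermitian) (hidem : ∀ x, IsIdempotentElem (P x))
    (hsum : ∑ x, P x = 1) {x y : κ} (hxy : x ≠ y) : P x * P y = 0 := by
  classical
  have hgram : ∀ z, trace ((P z * P x)ᴴ * (P z * P x)) = trace (P z * P x) := fun z => by
    rw [conjTranspose_mul, (hherm x).eq, (hherm z).eq, mul_assoc, ← mul_assoc (P z), (hidem z).eq,
      trace_mul_comm, mul_assoc, (hidem x).eq]
  have hrest : ∑ z ∈ Finset.univ.erase x, trace ((P z * P x)ᴴ * (P z * P x)) = 0 := by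
    rw [Finset.sum_congr rfl fun z _ => hgram z, Finset.sum_erase_eq_sub (Finset.mem_univ x),
      ← trace_sum, ← Finset.sum_mul, hsum, one_mul, (hidem x).eq, sub_self]
  have hyx : P y * P x = 0 := by
    rw [← trace_conjTranspose_mul_self_eq_zero_iff]
    exact (Finset.sum_eq_zero_iff_of_nonneg fun z _ =>
      (posSemidef_conjTranspose_mul_self _).trace_nonneg).mp hrest y (by simpa using hxy.symm)
  simpa [(hherm x).eq, (hherm y).eq] using congrArg conjTranspose hyx

end Matrix

section Fisher

theorem conjTranspose_outerProd {ι : Type*} (E F : Matrix ι ι ℂ) :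
    (outerProd E F)ᴴ = outerProd F E := by
  ext p q
  simp [outerProd, mul_comm]

variable {ι κ : Type*} [Fintype ι] [Fintype κ]

theorem outerProd_mul_outerProd (E F G H : Matrix ι ι ℂ) :
    outerProd E F * outerProd G H = trace (Fᴴ * G) • outerProd E H := by
  ext p q
  simp only [mul_apply, outerProd, of_apply, Matrix.smul_apply, smul_eq_mul, trace, diag,
    conjTranspose_apply, Fintype.sum_prod_type, Finset.sum_mul]
  rw [Finset.sum_comm]
  exact Finset.sum_congr rfl fun i _ => Finset.sum_congr rfl fun j _ => by ring

theorem trace_outerProd (E F : Matrix ι ι ℂ) : trace (outerProd E F) = trace (Fᴴ * E) := by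
  simp only [trace, diag, outerProd, of_apply, mul_apply, conjTranspose_apply,
    Fintype.sum_prod_type]
  rw [Finset.sum_comm]
  exact Finset.sum_congr rfl fun i _ => Finset.sum_congr rfl fun j _ => mul_comm _ _

theorem isHermitian_Fisher {A : κ → Matrix ι ι ℂ} (hA : ∀ x, (A x).IsHermitian) :
    (Fisher A).IsHermitian := by
  simp only [IsHermitian, Fisher, conjTranspose_sum, conjTranspose_smul, conjTranspose_outerProd,
    star_inv₀, ← trace_conjTranspose, (hA _).eq]

variable {A : κ → Matrix ι ι ℂ} (hnorm : ∀ x, trace ((A x)ᴴ * A x) = trace (A x))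
include hnorm

theorem Fisher_mul_self (horth : Pairwise fun x y => trace ((A x)ᴴ * A y) = 0) :
    Fisher A * Fisher A = Fisher A := by
  classical
  rw [Fisher, Finset.sum_mul_sum]
  refine Finset.sum_congr rfl fun x _ => ?_
  rw [Finset.sum_eq_single x, smul_mul_smul_comm, outerProd_mul_outerProd, hnorm, smul_smul,
    mul_right_comm]
  · -- `t⁻¹ * t⁻¹ * t = t⁻¹` holds also at `t = 0`
    congr 1
    simpa using mul_inv_mul_cancel (A x).trace⁻¹
  · intro y _ hyx
    rw [smul_mul_smul_comm, outerProd_mul_outerProd, horth hyx.symm, zero_smul, smul_zero]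
  · simp

theorem trace_Fisher (hne : ∀ x, trace (A x) ≠ 0) : trace (Fisher A) = Fintype.card κ := by
  simp [Fisher, trace_sum, trace_smul, trace_outerProd, hnorm, hne]

end Fisher

/-- For a sharp measurement, the Fisher information matrix is an orthogonal projection
of rank equal to the number of outcomes. -/
theorem stmt10 {d n : ℕ} (A : Fin n → Matrix (Fin d) (Fin d) ℂ)
    (hA : IsMeasurement A) (hA0 : ∀ x, A x ≠ 0)
    (hproj : ∀ x, (A x).IsHermitian ∧ A x * A x = A x) :
    (Fisher A).IsHermitian ∧ Fisher A * Fisher A = Fisher A ∧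
      (Fisher A).rank = n := by
  obtain ⟨hpsd, hsum⟩ := hA
  have hnorm : ∀ x, trace ((A x)ᴴ * A x) = trace (A x) := fun x => by
    rw [(hproj x).1.eq, (hproj x).2]
  have horth : Pairwise fun x y => trace ((A x)ᴴ * A y) = 0 := fun x y hxy => by
    dsimp only
    rw [(hproj x).1.eq, mul_eq_zero_of_sum_eq_one (fun z => (hproj z).1) (fun z => (hproj z).2)
      hsum hxy, trace_zero]
  have hne : ∀ x, trace (A x) ≠ 0 := fun x => (hpsd x).trace_eq_zero_iff.not.mpr (hA0 x)
  have hidem : Fisher A * Fisher A = Fisher A := Fisher_mul_self hnorm horth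
  refine ⟨isHermitian_Fisher fun x => (hproj x).1, hidem, ?_⟩
  have hrank := (rank_eq_trace_of_isIdempotentElem hidem).trans (trace_Fisher hnorm hne)
  rwa [Fintype.card_fin, Nat.cast_inj] at hrank
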